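/- arXiv:1706.07737 — 4 statements merged into one kernel-verified Lean document; each statement's English description precedes it below -/
import Mathlib

section
/- Let D be a bounded open subset of ℂ, A a nonempty closed subset of the closure of D, and f : ℂ → ℝ a continuous function with compact support contained in D. If both limits L₁ := lim_{γ→0⁺} (𝔐_A(F_γ), f) and L₂ := lim_{r→0⁺} (𝔐_A(𝒥_r), f) exist, then L₁ = (1/2)·L₂. -/
/-!
Since `𝒥_{e^{-u/γ²}}(s) = (√u/γ)·1[u < γ²|log s|]` and `(1 - u/2)e^{-u/2}` is the derivative of
`u e^{-u/2}`, `F_γ` is a mixture `F_γ(s) = ∫₀^∞ w(u) 𝒥_{e^{-u/γ²}}(s) du` with the kernel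
`w(u) = (1 - u/2) e^{-u/2} / √(2πu)`, which does not depend on `γ`. By Fubini,
`(𝔐_A(F_γ), f) = ∫₀^∞ w(u) Φ(u/γ²) du` where `Φ(t) = (𝔐_A(𝒥_{e^{-t}}), f)`. As `Φ(t) = O(√t)` and
`Φ(t) → L₂`, `Φ` is bounded on `(0, ∞)`, and dominated convergence as `γ → 0⁺` gives `L₂ ∫₀^∞ w`;
two Gamma integrals show `∫₀^∞ w = 1/2`.
-/

open MeasureTheory Filter

/-- `(𝔐_A(F), f) = ∫_{D∖A} f(z)·F(dist(z,A)) dz`, with respect to Lebesgue measure on ℂ. -/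
noncomputable def Mint (D A : Set ℂ) (F : ℝ → ℝ) (f : ℂ → ℝ) : ℝ :=
  ∫ z in D \ A, f z * F (Metric.infDist z A)

/-- `𝒥_r(s) = |log r|^{1/2} · 1_{(0,r)}(s)` -/
noncomputable def Jfun (r s : ℝ) : ℝ :=
  if s ∈ Set.Ioo 0 r then Real.sqrt |Real.log r| else 0

/-- `F_γ(s) = (γ/√(2π)) · 1_{(0,1)}(s) · |log s| · s^{γ²/2}` -/
noncomputable def Ffun (γ s : ℝ) : ℝ :=
  if s ∈ Set.Ioo (0:ℝ) 1 then γ / Real.sqrt (2 * Real.pi) * |Real.log s| * s ^ (γ ^ 2 / 2) else 0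

open Set Real Topology

noncomputable def mixingKernel (u : ℝ) : ℝ :=
  (1 - u / 2) * exp (-(u / 2)) / (√(2 * π) * √u)

lemma mixingKernel_mul_sqrt {u : ℝ} (hu : 0 < u) :
    mixingKernel u * √u = (1 - u / 2) * exp (-(u / 2)) / √(2 * π) := by
  have : √u ≠ 0 := (sqrt_pos.2 hu).ne'
  rw [mixingKernel]
  field_simp

lemma mixingKernel_eq_rpow {u : ℝ} (hu : 0 < u) :
    mixingKernel u = (u ^ ((1:ℝ) / 2 - 1) * exp (-(1 / 2 * u))
      - u ^ ((3:ℝ) / 2 - 1) * exp (-(1 / 2 * u)) / 2) / √(2 * π) := by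
  have hs : √u ≠ 0 := (sqrt_pos.2 hu).ne'
  rw [show (1:ℝ) / 2 - 1 = -(1 / 2) by norm_num, show (3:ℝ) / 2 - 1 = 1 / 2 by norm_num,
    rpow_neg hu.le, ← sqrt_eq_rpow, mixingKernel, show 1 / 2 * u = u / 2 by ring]
  field_simp
  rw [sq_sqrt hu.le]

lemma integrableOn_rpow_mul_exp_neg_half {s : ℝ} (hs : -1 < s) :
    IntegrableOn (fun u : ℝ => u ^ s * exp (-(1 / 2 * u))) (Ioi 0) := by
  simpa [neg_mul] using
    integrableOn_rpow_mul_exp_neg_mul_rpow hs one_pos (by norm_num : (0:ℝ) < 1 / 2)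

lemma integral_rpow_mul_exp_neg_half {a : ℝ} (ha : 0 < a) :
    ∫ u in Ioi 0, u ^ (a - 1) * exp (-(1 / 2 * u)) = 2 ^ a * Gamma a := by
  rw [integral_rpow_mul_exp_neg_mul_Ioi ha (by norm_num)]
  norm_num

lemma integrableOn_mixingKernel : IntegrableOn mixingKernel (Ioi 0) := by
  have h₁ := integrableOn_rpow_mul_exp_neg_half (s := (1:ℝ) / 2 - 1) (by norm_num)
  have h₃ := integrableOn_rpow_mul_exp_neg_half (s := (3:ℝ) / 2 - 1) (by norm_num)
  exact IntegrableOn.congr_fun ((h₁.sub (h₃.div_const 2)).div_const √(2 * π))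
    (fun u hu => (mixingKernel_eq_rpow hu).symm) measurableSet_Ioi

lemma integral_mixingKernel : ∫ u in Ioi 0, mixingKernel u = 1 / 2 := by
  have h₁ := integrableOn_rpow_mul_exp_neg_half (s := (1:ℝ) / 2 - 1) (by norm_num)
  have h₃ := integrableOn_rpow_mul_exp_neg_half (s := (3:ℝ) / 2 - 1) (by norm_num)
  rw [setIntegral_congr_fun measurableSet_Ioi fun u hu => mixingKernel_eq_rpow hu,
    integral_div, integral_sub h₁ (h₃.div_const 2), integral_div,
    integral_rpow_mul_exp_neg_half (by norm_num), integral_rpow_mul_exp_neg_half (by norm_num)]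
  have hΓ : Gamma (3 / 2) = Gamma (1 / 2) / 2 := by
    rw [show (3:ℝ) / 2 = 1 / 2 + 1 by norm_num, Gamma_add_one (by norm_num)]; ring
  have h2 : (2:ℝ) ^ ((3:ℝ) / 2) = 2 * 2 ^ ((1:ℝ) / 2) := by
    rw [show (3:ℝ) / 2 = 1 + 1 / 2 by norm_num, rpow_add (by norm_num), rpow_one]
  have hπ : √(2 * π) = 2 ^ ((1:ℝ) / 2) * Gamma (1 / 2) := by
    rw [Gamma_one_half_eq, ← sqrt_eq_rpow, sqrt_mul zero_le_two]
  rw [hΓ, h2, hπ]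
  have : 0 < 2 ^ ((1:ℝ) / 2) * Gamma (1 / 2) := by rw [← hπ]; positivity
  field_simp
  ring

lemma integral_one_sub_half_mul_exp_neg_half (b : ℝ) :
    ∫ u in (0:ℝ)..b, (1 - u / 2) * exp (-(u / 2)) = b * exp (-(b / 2)) := by
  have hderiv : ∀ x ∈ uIcc 0 b,
      HasDerivAt (fun u => u * exp (-(u / 2))) ((1 - x / 2) * exp (-(x / 2))) x := by
    intro x _
    exact ((hasDerivAt_id' x).fun_mul ((hasDerivAt_id' x).div_const 2).fun_neg.exp).congr_deriv
      (by ring)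
  rw [intervalIntegral.integral_eq_sub_of_hasDerivAt hderiv
    (Continuous.intervalIntegrable (by fun_prop) _ _)]
  simp

lemma abs_Jfun_le (r s : ℝ) : |Jfun r s| ≤ √|log r| := by
  unfold Jfun
  split_ifs
  · exact (abs_of_nonneg (sqrt_nonneg _)).le
  · simp

lemma measurable_Jfun : Measurable (Function.uncurry Jfun) := by
  have hset : MeasurableSet {p : ℝ × ℝ | p.2 ∈ Ioo 0 p.1} :=
    (measurableSet_lt measurable_const measurable_snd).inter
      (measurableSet_lt measurable_snd measurable_fst)
  exact Measurable.ite hset (by fun_prop) measurable_const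

lemma Jfun_exp_neg_of_mem {t s : ℝ} (ht : 0 < t) (hs : s ∈ Ioo 0 (exp (-t))) :
    Jfun (exp (-t)) s = √t := by
  rw [Jfun, if_pos hs, log_exp, abs_neg, abs_of_pos ht]

theorem integral_mixingKernel_mul_Jfun {γ : ℝ} (hγ : 0 < γ) (s : ℝ) :
    ∫ u in Ioi 0, mixingKernel u * Jfun (exp (-(u / γ ^ 2))) s = Ffun γ s := by
  by_cases hs : s ∈ Ioo 0 1
  · obtain ⟨hs₀, hs₁⟩ := hs
    have hT : 0 < -log s := neg_pos.2 (log_neg hs₀ hs₁)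
    have hmem : ∀ u, s ∈ Ioo 0 (exp (-(u / γ ^ 2))) ↔ u < γ ^ 2 * -log s := by
      intro u
      rw [mem_Ioo, and_iff_right hs₀, ← log_lt_iff_lt_exp hs₀, lt_neg, div_lt_iff₀ (by positivity),
        mul_comm]
    have hintegrand : EqOn (fun u => mixingKernel u * Jfun (exp (-(u / γ ^ 2))) s)
        ((Ioo 0 (γ ^ 2 * -log s)).indicator fun u => (1 - u / 2) * exp (-(u / 2)) / √(2 * π) / γ)
        (Ioi 0) := by
      intro u (hu : 0 < u)
      dsimp only
      by_cases hlt : u < γ ^ 2 * -log s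
      · rw [indicator_of_mem (show u ∈ Ioo 0 _ from ⟨hu, hlt⟩),
          Jfun_exp_neg_of_mem (by positivity) ((hmem u).2 hlt), sqrt_div' _ (sq_nonneg γ),
          sqrt_sq hγ.le, ← mul_div_assoc, mixingKernel_mul_sqrt hu]
      · rw [indicator_of_notMem (fun h => hlt h.2), Jfun, if_neg (fun h => hlt ((hmem u).1 h)),
          mul_zero]
    rw [setIntegral_congr_fun measurableSet_Ioi hintegrand, setIntegral_indicator measurableSet_Ioo,
      inter_eq_self_of_subset_right Ioo_subset_Ioi_self, ← integral_Ioc_eq_integral_Ioo,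
      ← intervalIntegral.integral_of_le (by positivity), intervalIntegral.integral_div,
      intervalIntegral.integral_div, integral_one_sub_half_mul_exp_neg_half,
      Ffun, if_pos ⟨hs₀, hs₁⟩, abs_of_neg (log_neg hs₀ hs₁), rpow_def_of_pos hs₀]
    field_simp
  · have hzero : EqOn (fun u => mixingKernel u * Jfun (exp (-(u / γ ^ 2))) s) 0 (Ioi 0) := by
      intro u (hu : 0 < u)
      dsimp only
      have hexp : exp (-(u / γ ^ 2)) < 1 := exp_lt_one_iff.2 (neg_neg_of_pos (by positivity))
      rw [Jfun, if_neg (fun h => hs ⟨h.1, h.2.trans hexp⟩), mul_zero, Pi.zero_apply]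
    rw [setIntegral_congr_fun measurableSet_Ioi hzero, Pi.zero_def, integral_zero, Ffun, if_neg hs]

lemma measurable_mixingKernel : Measurable mixingKernel := by
  unfold mixingKernel
  fun_prop

lemma integrableOn_mixingKernel_mul_sqrt :
    IntegrableOn (fun u => mixingKernel u * √u) (Ioi 0) := by
  have h₀ := integrableOn_rpow_mul_exp_neg_half (s := 0) (by norm_num)
  have h₁ := integrableOn_rpow_mul_exp_neg_half (s := 1) (by norm_num)
  refine IntegrableOn.congr_fun ((h₀.sub (h₁.div_const 2)).div_const √(2 * π))
    (fun u hu => ?_) measurableSet_Ioi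
  simp only [Pi.sub_apply, rpow_zero, rpow_one, one_div, inv_mul_eq_div]
  rw [mixingKernel_mul_sqrt hu]
  ring

section Mixture

variable {X : Type*} [MeasurableSpace X] {μ : Measure X} {f ρ : X → ℝ}

lemma abs_integral_mul_Jfun_le (hf : Integrable f μ) (r : ℝ) :
    |∫ x, f x * Jfun r (ρ x) ∂μ| ≤ √|log r| * ∫ x, |f x| ∂μ := by
  rw [← Real.norm_eq_abs, ← MeasureTheory.integral_const_mul]
  refine norm_integral_le_of_norm_le (hf.abs.const_mul _) (ae_of_all _ fun x => ?_)
  rw [Real.norm_eq_abs, abs_mul, mul_comm]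
  exact mul_le_mul_of_nonneg_right (abs_Jfun_le r (ρ x)) (abs_nonneg _)

lemma measurable_integral_mul_Jfun_exp_neg [SFinite μ] (hf : Measurable f) (hρ : Measurable ρ) :
    Measurable fun t => ∫ x, f x * Jfun (exp (-t)) (ρ x) ∂μ := by
  have hJ : Measurable fun p : ℝ × X => Jfun (exp (-p.1)) (ρ p.2) :=
    measurable_Jfun.comp ((measurable_fst.neg.exp).prodMk (hρ.comp measurable_snd))
  exact (StronglyMeasurable.integral_prod_right
    ((hf.comp measurable_snd).mul hJ).stronglyMeasurable).measurable

theorem integral_mul_Ffun_eq_integral_mixingKernel [SFinite μ] (hf : Integrable f μ)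
    (hρ : Measurable ρ) {γ : ℝ} (hγ : 0 < γ) :
    ∫ x, f x * Ffun γ (ρ x) ∂μ
      = ∫ u in Ioi 0, mixingKernel u * ∫ x, f x * Jfun (exp (-(u / γ ^ 2))) (ρ x) ∂μ := by
  set K : X → ℝ → ℝ := fun x u => f x * (mixingKernel u * Jfun (exp (-(u / γ ^ 2))) (ρ x))
  have hKm : AEStronglyMeasurable (Function.uncurry K) (μ.prod (volume.restrict (Ioi 0))) := by
    refine hf.aestronglyMeasurable.comp_fst.mul (Measurable.aestronglyMeasurable ?_)
    exact (measurable_mixingKernel.comp measurable_snd).mul (measurable_Jfun.comp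
      ((measurable_snd.div_const _).neg.exp.prodMk (hρ.comp measurable_fst)))
  have hbound : ∀ᵐ p ∂μ.prod (volume.restrict (Ioi 0)),
      ‖Function.uncurry K p‖ ≤ |f p.1| * (|mixingKernel p.2 * √p.2| / γ) := by
    filter_upwards [Measure.quasiMeasurePreserving_snd.ae (ae_restrict_mem measurableSet_Ioi)]
      with p (hp : 0 < p.2)
    have hJ : |Jfun (exp (-(p.2 / γ ^ 2))) (ρ p.1)| ≤ √p.2 / γ := by
      have := abs_Jfun_le (exp (-(p.2 / γ ^ 2))) (ρ p.1)
      rwa [log_exp, abs_neg, abs_of_pos (show 0 < p.2 / γ ^ 2 by positivity),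
        sqrt_div' _ (sq_nonneg γ), sqrt_sq hγ.le] at this
    rw [Real.norm_eq_abs, Function.uncurry_apply_pair, abs_mul, abs_mul, abs_mul,
      abs_of_nonneg (sqrt_nonneg _), mul_div_assoc]
    gcongr
  have hKi : Integrable (Function.uncurry K) (μ.prod (volume.restrict (Ioi 0))) :=
    Integrable.mono' (hf.abs.mul_prod (integrableOn_mixingKernel_mul_sqrt.abs.div_const γ))
      hKm hbound
  calc ∫ x, f x * Ffun γ (ρ x) ∂μ = ∫ x, (∫ u in Ioi 0, K x u) ∂μ := by
        congr 1 with x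
        rw [← integral_mixingKernel_mul_Jfun hγ, ← integral_const_mul]
    _ = ∫ u in Ioi 0, ∫ x, K x u ∂μ := integral_integral_swap hKi
    _ = _ := by
        congr 1 with u
        rw [← integral_const_mul]
        congr 1 with x
        ring

end Mixture

lemma exists_abs_le_of_tendsto_atTop {Φ : ℝ → ℝ} {L C : ℝ} (hL : Tendsto Φ atTop (𝓝 L))
    (hC : ∀ t > 0, |Φ t| ≤ C * √t) : ∃ M, ∀ t > 0, |Φ t| ≤ M := by
  obtain ⟨T, hT⟩ := eventually_atTop.1 (hL.eventually (Metric.ball_mem_nhds L one_pos))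
  refine ⟨max (|C| * √T) (|L| + 1), fun t ht => ?_⟩
  rcases le_or_gt t T with htT | htT
  · calc |Φ t| ≤ C * √t := hC t ht
      _ ≤ |C| * √T := mul_le_mul (le_abs_self C) (sqrt_le_sqrt htT) (sqrt_nonneg _) (abs_nonneg C)
      _ ≤ _ := le_max_left _ _
  · have : |Φ t - L| < 1 := hT t htT.le
    calc |Φ t| ≤ |L| + 1 := by linarith [abs_sub_abs_le_abs_sub (Φ t) L]
      _ ≤ _ := le_max_right _ _

lemma tendsto_div_sq_nhdsGT_zero_atTop {u : ℝ} (hu : 0 < u) :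
    Tendsto (fun γ : ℝ => u / γ ^ 2) (𝓝[>] 0) atTop := by
  have hsq : Tendsto (fun γ : ℝ => γ ^ 2) (𝓝[>] 0) (𝓝[>] 0) :=
    tendsto_nhdsWithin_of_tendsto_nhds_of_eventually_within _
      ((continuous_pow 2).tendsto' 0 0 (by norm_num) |>.mono_left nhdsWithin_le_nhds)
      (eventually_nhdsWithin_of_forall fun γ (hγ : 0 < γ) => pow_pos hγ 2)
  simpa only [div_eq_mul_inv, Function.comp_def] using
    (tendsto_inv_nhdsGT_zero.comp hsq).const_mul_atTop hu

theorem tendsto_integral_mixingKernel_mul {Φ : ℝ → ℝ} {L M : ℝ} (hΦ : Measurable Φ)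
    (hM : ∀ t > 0, |Φ t| ≤ M) (hL : Tendsto Φ atTop (𝓝 L)) :
    Tendsto (fun γ => ∫ u in Ioi 0, mixingKernel u * Φ (u / γ ^ 2)) (𝓝[>] 0) (𝓝 (1 / 2 * L)) := by
  have hlim : Tendsto (fun γ => ∫ u in Ioi 0, mixingKernel u * Φ (u / γ ^ 2)) (𝓝[>] 0)
      (𝓝 (∫ u in Ioi 0, mixingKernel u * L)) := by
    refine tendsto_integral_filter_of_dominated_convergence (fun u => |mixingKernel u| * M)
      (Eventually.of_forall fun γ => ?_) ?_ (integrableOn_mixingKernel.abs.mul_const M) ?_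
    · exact (measurable_mixingKernel.mul
        (hΦ.comp (measurable_id.div_const _))).aestronglyMeasurable
    · filter_upwards [self_mem_nhdsWithin] with γ (hγ : 0 < γ)
      filter_upwards [ae_restrict_mem measurableSet_Ioi] with u (hu : 0 < u)
      rw [Real.norm_eq_abs, abs_mul]
      exact mul_le_mul_of_nonneg_left (hM _ (by positivity)) (abs_nonneg _)
    · filter_upwards [ae_restrict_mem measurableSet_Ioi] with u (hu : 0 < u)
      exact (hL.comp (tendsto_div_sq_nhdsGT_zero_atTop hu)).const_mul _
  rwa [integral_mul_const, integral_mixingKernel] at hlim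

theorem stmt1_general (D A : Set ℂ) (f : ℂ → ℝ) (hf : Continuous f) (hfc : HasCompactSupport f)
    (L₁ L₂ : ℝ)
    (h₁ : Tendsto (fun γ => Mint D A (Ffun γ) f) (nhdsWithin 0 (Set.Ioi 0)) (nhds L₁))
    (h₂ : Tendsto (fun r => Mint D A (Jfun r) f) (nhdsWithin 0 (Set.Ioi 0)) (nhds L₂)) :
    L₁ = (1 / 2) * L₂ := by
  have hfi : Integrable f (volume.restrict (D \ A)) :=
    (hf.integrable_of_hasCompactSupport hfc).restrict
  have hρ : Measurable fun z => Metric.infDist z A := (Metric.continuous_infDist_pt A).measurable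
  have hΦ : Tendsto (fun t => Mint D A (Jfun (exp (-t))) f) atTop (𝓝 L₂) :=
    h₂.comp (tendsto_exp_atBot_nhdsGT.comp tendsto_neg_atTop_atBot)
  obtain ⟨M, hM⟩ := exists_abs_le_of_tendsto_atTop hΦ (C := ∫ z in D \ A, |f z|) fun t ht => by
    simpa only [Mint, log_exp, abs_neg, abs_of_pos ht, mul_comm]
      using abs_integral_mul_Jfun_le (ρ := fun z => Metric.infDist z A) hfi (exp (-t))
  refine tendsto_nhds_unique h₁ ((tendsto_integral_mixingKernel_mul
    (measurable_integral_mul_Jfun_exp_neg hf.measurable hρ) hM hΦ).congr' ?_)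
  filter_upwards [self_mem_nhdsWithin] with γ hγ
  exact (integral_mul_Ffun_eq_integral_mixingKernel hfi hρ hγ).symm

/-- If both limits `L₁ = lim_{γ→0⁺} (𝔐_A(F_γ), f)` and `L₂ = lim_{r→0⁺} (𝔐_A(𝒥_r), f)` exist,
then `L₁ = (1/2)·L₂`. -/
theorem stmt1 (D A : Set ℂ) (hD : IsOpen D) (hDb : Bornology.IsBounded D)
    (hA : IsClosed A) (hAne : A.Nonempty) (hAD : A ⊆ closure D)
    (f : ℂ → ℝ) (hf : Continuous f) (hfc : HasCompactSupport f) (hfD : tsupport f ⊆ D)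
    (L₁ L₂ : ℝ)
    (h₁ : Tendsto (fun γ => Mint D A (Ffun γ) f) (nhdsWithin 0 (Set.Ioi 0)) (nhds L₁))
    (h₂ : Tendsto (fun r => Mint D A (Jfun r) f) (nhdsWithin 0 (Set.Ioi 0)) (nhds L₂)) :
    L₁ = (1 / 2) * L₂ :=
  stmt1_general D A f hf hfc L₁ L₂ h₁ h₂
end

section
/- Let D be a bounded open subset of ℂ and A a nonempty closed subset of the closure of D. Suppose that for every continuous function f : ℂ → ℝ with compact support contained in D, the limit lim_{γ→0⁺} (𝔐_A(F_γ), f) exists. Then for each such f there is a constant C > 0 such that |(𝔐_A(q_r), f)| ≤ C for all r ∈ (0, 1/2]. -/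
open MeasureTheory Filter

/-- `q_r(s) = 1_{(0,1)}(s) · |log(max(r,s))| / |log r|^{1/2}` -/
noncomputable def qfun (r s : ℝ) : ℝ :=
  if s ∈ Set.Ioo (0:ℝ) 1 then |Real.log (max r s)| / Real.sqrt |Real.log r| else 0

/-!
For `s ∈ (0, 1)`, integrating `F_γ(s)` over `γ ∈ (0, b]` gives `(1 - s^{b²/2}) / √(2π)`. Taking
`b = |log r|^{-1/2}`, the elementary bound `min(t, T) ≤ 3T(1 - e^{-t/2T})` shows that this
dominates `q_r(s) / (3 √(2π) |log r|^{1/2})`. By Fubini,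
`(𝔐_A(q_r), |f|) ≤ 3 √(2π) · b⁻¹ ∫₀^b (𝔐_A(F_γ), |f|) dγ ≤ 3 √(2π) · sup_{γ > 0} (𝔐_A(F_γ), |f|)`,
and the supremum is finite: near `γ = 0` by the assumed convergence, and away from `0`
because `F_γ ≤ 2 / γ`.
-/

open Real Set

lemma one_le_sqrt_two_pi : 1 ≤ √(2 * π) :=
  one_le_sqrt.2 (by linarith [pi_gt_three])

lemma Ffun_of_mem {γ s : ℝ} (hs : s ∈ Ioo (0:ℝ) 1) :
    Ffun γ s = γ / √(2 * π) * |log s| * exp (-(γ ^ 2 * |log s|) / 2) := by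
  rw [Ffun, if_pos hs, rpow_def_of_pos hs.1, abs_of_neg (log_neg hs.1 hs.2)]
  ring_nf

lemma Ffun_of_notMem {γ s : ℝ} (hs : s ∉ Ioo (0:ℝ) 1) : Ffun γ s = 0 := if_neg hs

lemma Ffun_nonneg {γ : ℝ} (hγ : 0 ≤ γ) (s : ℝ) : 0 ≤ Ffun γ s := by
  by_cases hs : s ∈ Ioo (0:ℝ) 1
  · rw [Ffun_of_mem hs]; positivity
  · rw [Ffun_of_notMem hs]

lemma Ffun_le_two_div {γ : ℝ} (hγ : 0 < γ) (s : ℝ) : Ffun γ s ≤ 2 / γ := by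
  by_cases hs : s ∈ Ioo (0:ℝ) 1
  · have hy (y : ℝ) : y * exp (-y) ≤ 1 :=
      (mul_exp_neg_le_exp_neg_one y).trans (exp_le_one_iff.2 (by norm_num))
    calc Ffun γ s = 2 / γ * (γ ^ 2 * |log s| / 2 * exp (-(γ ^ 2 * |log s| / 2))) / √(2 * π) := by
          rw [Ffun_of_mem hs]; field_simp
      _ ≤ 2 / γ * 1 / 1 := by gcongr; exacts [hy _, one_le_sqrt_two_pi]
      _ = 2 / γ := by ring
  · rw [Ffun_of_notMem hs]; positivity

lemma continuous_Ffun_left (s : ℝ) : Continuous fun γ => Ffun γ s := by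
  by_cases hs : s ∈ Ioo (0:ℝ) 1
  · simp_rw [Ffun_of_mem hs]; fun_prop
  · simp_rw [Ffun_of_notMem hs]; fun_prop

lemma measurable_Ffun_uncurry : Measurable (Function.uncurry Ffun) :=
  Measurable.ite (measurableSet_Ioo.preimage measurable_snd) (by fun_prop) measurable_const

lemma integral_Ioc_Ffun {b s : ℝ} (hb : 0 ≤ b) (hs : s ∈ Ioo (0:ℝ) 1) :
    ∫ γ in Ioc 0 b, Ffun γ s = (1 - exp (-(b ^ 2 * |log s|) / 2)) / √(2 * π) := by
  have hderiv (γ : ℝ) : HasDerivAt (fun x => -exp (-(x ^ 2 * |log s|) / 2) / √(2 * π))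
      (Ffun γ s) γ := by
    rw [Ffun_of_mem hs]
    refine ((((hasDerivAt_pow 2 γ).mul_const |log s|).neg.div_const 2).exp.neg.div_const
      √(2 * π)).congr_deriv ?_
    simp only [Pi.neg_apply]
    ring
  rw [← intervalIntegral.integral_of_le hb, intervalIntegral.integral_eq_sub_of_hasDerivAt
    (fun γ _ => hderiv γ) ((continuous_Ffun_left s).intervalIntegrable 0 b)]
  simp only [zero_pow two_ne_zero, zero_mul, neg_zero, zero_div, exp_zero]
  ring

lemma integral_Ioc_Ffun_le_one {b : ℝ} (hb : 0 ≤ b) (s : ℝ) : ∫ γ in Ioc 0 b, Ffun γ s ≤ 1 := by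
  by_cases hs : s ∈ Ioo (0:ℝ) 1
  · rw [integral_Ioc_Ffun hb hs, div_le_one₀ (by positivity)]
    linarith [exp_pos (-(b ^ 2 * |log s|) / 2), one_le_sqrt_two_pi]
  · simp [Ffun_of_notMem hs]

lemma integrable_mul_Ffun_prod {X : Type*} [MeasurableSpace X] {μ : Measure X} [SFinite μ]
    {g φ : X → ℝ} (hg : Integrable g μ) (hφ : Measurable φ) {b : ℝ} (hb : 0 ≤ b) :
    Integrable (Function.uncurry fun x γ => g x * Ffun γ (φ x))
      (μ.prod (volume.restrict (Ioc 0 b))) := by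
  have hmeas : AEStronglyMeasurable (Function.uncurry fun x γ => g x * Ffun γ (φ x))
      (μ.prod (volume.restrict (Ioc 0 b))) :=
    hg.aestronglyMeasurable.comp_fst.mul (measurable_Ffun_uncurry.comp
      (measurable_snd.prodMk (hφ.comp measurable_fst))).aestronglyMeasurable
  refine (integrable_prod_iff hmeas).2 ⟨ae_of_all _ fun x =>
    (continuous_Ffun_left (φ x)).integrableOn_Ioc.const_mul (g x), ?_⟩
  refine hg.norm.mono' hmeas.norm.integral_prod_right' (ae_of_all _ fun x => ?_)
  have hnorm : ∫ γ in Ioc 0 b, ‖g x * Ffun γ (φ x)‖ = |g x| * ∫ γ in Ioc 0 b, Ffun γ (φ x) := by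
    rw [← integral_const_mul]
    refine setIntegral_congr_fun measurableSet_Ioc fun γ hγ => ?_
    rw [norm_mul, Real.norm_eq_abs, Real.norm_of_nonneg (Ffun_nonneg hγ.1.le _)]
  have hF0 : 0 ≤ ∫ γ in Ioc 0 b, Ffun γ (φ x) :=
    setIntegral_nonneg measurableSet_Ioc fun γ hγ => Ffun_nonneg hγ.1.le _
  simp only [Function.uncurry_apply_pair]
  rw [hnorm, Real.norm_of_nonneg (mul_nonneg (abs_nonneg _) hF0), Real.norm_eq_abs]
  exact mul_le_of_le_one_right (abs_nonneg _) (integral_Ioc_Ffun_le_one hb _)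

lemma min_le_three_mul_one_sub_exp {t T : ℝ} (ht : 0 ≤ t) (hT : 0 < T) :
    min t T ≤ 3 * T * (1 - exp (-(t / (2 * T)))) := by
  set x := t / (2 * T)
  have htx : t = 2 * T * x := by simp only [x]; field_simp
  have hx : 0 ≤ x := by positivity
  -- `exp (-x) ≤ 1 / (1 + x)`, so `1 - exp (-x) ≥ x / (1 + x) ≥ min (2 * x) 1 / 3`
  have hexp : exp (-x) * (1 + x) ≤ 1 := by
    have := mul_le_mul_of_nonneg_left (add_one_le_exp x) (exp_pos (-x)).le
    rwa [← exp_add, neg_add_cancel, exp_zero, add_comm] at this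
  rcases le_total t T with h | h
  · rw [min_eq_left h]; nlinarith
  · rw [min_eq_right h]; nlinarith

lemma abs_log_max_eq_min {r s : ℝ} (hr : r ∈ Ioo (0:ℝ) 1) (hs : s ∈ Ioo (0:ℝ) 1) :
    |log (max r s)| = min |log s| |log r| := by
  rw [abs_of_neg (log_neg hr.1 hr.2), abs_of_neg (log_neg hs.1 hs.2),
    abs_of_neg (log_neg (lt_max_of_lt_left hr.1) (max_lt hr.2 hs.2))]
  rcases le_total r s with h | h
  · rw [max_eq_right h, min_eq_left (neg_le_neg (log_le_log hr.1 h))]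
  · rw [max_eq_left h, min_eq_right (neg_le_neg (log_le_log hs.1 h))]

lemma qfun_nonneg (r s : ℝ) : 0 ≤ qfun r s := by
  unfold qfun; split_ifs <;> positivity

lemma qfun_le_integral_Ffun {r : ℝ} (hr : r ∈ Ioo (0:ℝ) 1) (s : ℝ) :
    qfun r s ≤ 3 * √(2 * π) * √|log r| * ∫ γ in Ioc 0 (√|log r|)⁻¹, Ffun γ s := by
  by_cases hs : s ∈ Ioo (0:ℝ) 1
  · have hT : 0 < |log r| := abs_pos.2 (log_neg hr.1 hr.2).ne
    have hsT : √|log r| ^ 2 = |log r| := sq_sqrt hT.le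
    rw [qfun, if_pos hs, integral_Ioc_Ffun (by positivity) hs, abs_log_max_eq_min hr hs,
      inv_pow, hsT, div_le_iff₀ (sqrt_pos.2 hT)]
    calc min |log s| |log r| ≤ 3 * |log r| * (1 - exp (-(|log s| / (2 * |log r|)))) :=
          min_le_three_mul_one_sub_exp (abs_nonneg _) hT
      _ = _ := by field_simp; rw [hsT]; ring_nf
  · simp [qfun, hs, Ffun_of_notMem hs]

section Mint

variable {D A : Set ℂ}

lemma abs_Mint_le {F : ℝ → ℝ} (hF : ∀ s, 0 ≤ F s) (f : ℂ → ℝ) :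
    |Mint D A F f| ≤ Mint D A F |f| :=
  abs_integral_le_integral_abs.trans_eq <| integral_congr_ae <| ae_of_all _ fun z => by
    simp [abs_mul, abs_of_nonneg (hF _)]

lemma Mint_le_mul_integral {F : ℝ → ℝ} {g : ℂ → ℝ} {C : ℝ} (hF0 : ∀ s, 0 ≤ F s)
    (hFC : ∀ s, F s ≤ C) (hg0 : ∀ z, 0 ≤ g z) (hg : IntegrableOn g (D \ A)) :
    Mint D A F g ≤ C * ∫ z in D \ A, g z := by
  rw [← integral_const_mul]
  refine integral_mono_of_nonneg (ae_of_all _ fun z => mul_nonneg (hg0 z) (hF0 _))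
    (hg.const_mul C) (ae_of_all _ fun z => ?_)
  dsimp only
  rw [mul_comm C]
  exact mul_le_mul_of_nonneg_left (hFC _) (hg0 z)

lemma bddAbove_Mint_Ffun {g : ℂ → ℝ} (hg0 : ∀ z, 0 ≤ g z) (hg : IntegrableOn g (D \ A)) {L : ℝ}
    (hL : Tendsto (fun γ => Mint D A (Ffun γ) g) (nhdsWithin 0 (Ioi 0)) (nhds L)) :
    BddAbove ((fun γ => Mint D A (Ffun γ) g) '' Ioi 0) := by
  obtain ⟨δ, hδ, hnear⟩ :=
    mem_nhdsGT_iff_exists_Ioo_subset.1 (hL.eventually_lt_const (lt_add_one L))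
  refine ⟨max (L + 1) (2 / δ * ∫ z in D \ A, g z), forall_mem_image.2 fun γ hγ => ?_⟩
  rcases lt_or_ge γ δ with h | h
  · exact (hnear ⟨hγ, h⟩).le.trans (le_max_left _ _)
  · refine (Mint_le_mul_integral (Ffun_nonneg (le_of_lt hγ)) (fun s => ?_) hg0 hg).trans
      (le_max_right _ _)
    exact (Ffun_le_two_div hγ s).trans (div_le_div_of_nonneg_left zero_le_two hδ h)

lemma integral_Ioc_Mint_Ffun {g : ℂ → ℝ} (hg : IntegrableOn g (D \ A)) {b : ℝ} (hb : 0 ≤ b) :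
    ∫ γ in Ioc 0 b, Mint D A (Ffun γ) g =
      ∫ z in D \ A, g z * ∫ γ in Ioc 0 b, Ffun γ (Metric.infDist z A) := by
  simp only [Mint, ← integral_const_mul]
  exact (integral_integral_swap
    (integrable_mul_Ffun_prod hg (Metric.continuous_infDist_pt A).measurable hb)).symm

lemma Mint_qfun_le {g : ℂ → ℝ} (hg0 : ∀ z, 0 ≤ g z) (hg : IntegrableOn g (D \ A)) {r M : ℝ}
    (hr : r ∈ Ioo (0:ℝ) 1) (hM : ∀ γ ∈ Ioc 0 (√|log r|)⁻¹, Mint D A (Ffun γ) g ≤ M) :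
    Mint D A (qfun r) g ≤ 3 * √(2 * π) * M := by
  set b := (√|log r|)⁻¹
  set K := 3 * √(2 * π) * √|log r|
  have hb : 0 ≤ b := by positivity
  have hKb : K * b = 3 * √(2 * π) := by
    have : √|log r| ≠ 0 := (sqrt_pos.2 (abs_pos.2 (log_neg hr.1 hr.2).ne)).ne'
    simp only [K, b]
    field_simp
  have hint : Integrable (fun z => g z * ∫ γ in Ioc 0 b, Ffun γ (Metric.infDist z A))
      (volume.restrict (D \ A)) := by
    simpa only [Function.uncurry_apply_pair, integral_const_mul] using (integrable_mul_Ffun_prod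
      hg (Metric.continuous_infDist_pt A).measurable hb).integral_prod_left
  calc Mint D A (qfun r) g
      ≤ ∫ z in D \ A, K * (g z * ∫ γ in Ioc 0 b, Ffun γ (Metric.infDist z A)) := by
        refine integral_mono_of_nonneg (ae_of_all _ fun z => mul_nonneg (hg0 z) (qfun_nonneg _ _))
          (hint.const_mul K) (ae_of_all _ fun z => ?_)
        dsimp only
        rw [mul_left_comm]
        exact mul_le_mul_of_nonneg_left (qfun_le_integral_Ffun hr _) (hg0 z)
    _ = K * ∫ γ in Ioc 0 b, Mint D A (Ffun γ) g := by
        rw [integral_const_mul, integral_Ioc_Mint_Ffun hg hb]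
    _ ≤ K * ∫ _ in Ioc 0 b, M := by
        refine mul_le_mul_of_nonneg_left ?_ (by positivity)
        exact integral_mono_of_nonneg
          ((ae_restrict_iff' measurableSet_Ioc).2 (ae_of_all _ fun γ hγ => integral_nonneg
            fun z => mul_nonneg (hg0 z) (Ffun_nonneg hγ.1.le _)))
          (integrable_const M)
          ((ae_restrict_iff' measurableSet_Ioc).2 (ae_of_all _ hM))
    _ = 3 * √(2 * π) * M := by
        rw [setIntegral_const, Real.volume_real_Ioc_of_le hb, sub_zero, smul_eq_mul, ← mul_assoc,
          hKb]

end Mint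

theorem stmt3_general (D A : Set ℂ)
    (hF : ∀ f : ℂ → ℝ, Continuous f → HasCompactSupport f → tsupport f ⊆ D →
      ∃ L : ℝ, Tendsto (fun γ => Mint D A (Ffun γ) f) (nhdsWithin 0 (Set.Ioi 0)) (nhds L)) :
    ∀ f : ℂ → ℝ, Continuous f → HasCompactSupport f → tsupport f ⊆ D →
      ∃ C : ℝ, 0 < C ∧ ∀ r ∈ Set.Ioc (0:ℝ) (1 / 2), |Mint D A (qfun r) f| ≤ C := by
  intro f hf hfc hfD
  have hf_abs : Continuous |f| := hf.abs
  obtain ⟨L, hL⟩ := hF |f| hf_abs hfc.abs ((tsupport_comp_subset abs_zero f).trans hfD)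
  have habs0 (z : ℂ) : 0 ≤ |f| z := abs_nonneg (f z)
  have hint : IntegrableOn |f| (D \ A) :=
    (hf_abs.integrable_of_hasCompactSupport hfc.abs).integrableOn
  obtain ⟨M, hM⟩ := bddAbove_Mint_Ffun habs0 hint hL
  refine ⟨max (3 * √(2 * π) * M) 1, lt_max_of_lt_right one_pos, fun r hr => ?_⟩
  calc |Mint D A (qfun r) f| ≤ Mint D A (qfun r) |f| := abs_Mint_le (qfun_nonneg r) f
    _ ≤ 3 * √(2 * π) * M :=
        Mint_qfun_le habs0 hint ⟨hr.1, by linarith [hr.2]⟩ fun γ hγ => hM ⟨γ, hγ.1, rfl⟩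
    _ ≤ _ := le_max_left _ _

/-- If for every continuous compactly supported (in `D`) test function `f` the limit
`lim_{γ→0⁺} (𝔐_A(F_γ), f)` exists, then for each such `f`, `(𝔐_A(q_r), f)` stays bounded
as `r → 0`. -/
theorem stmt3 (D A : Set ℂ) (hD : IsOpen D) (hDb : Bornology.IsBounded D)
    (hA : IsClosed A) (hAne : A.Nonempty) (hAD : A ⊆ closure D)
    (hF : ∀ f : ℂ → ℝ, Continuous f → HasCompactSupport f → tsupport f ⊆ D →
      ∃ L : ℝ, Tendsto (fun γ => Mint D A (Ffun γ) f) (nhdsWithin 0 (Set.Ioi 0)) (nhds L)) :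
    ∀ f : ℂ → ℝ, Continuous f → HasCompactSupport f → tsupport f ⊆ D →
      ∃ C : ℝ, 0 < C ∧ ∀ r ∈ Set.Ioc (0:ℝ) (1 / 2), |Mint D A (qfun r) f| ≤ C :=
  stmt3_general D A hF
end

section
/- For every γ₀ > 0 there exists a constant C > 0 such that for all s ∈ (0,1), q_{1/2}(s) ≤ C·Σ_{k=0}^{∞} 2^{−k/2}·F_{2^{−k/2}·γ₀}(s), where the series on the right-hand side converges in [0, ∞]. -/
open MeasureTheory Filter

lemma key (γ₀ L : ℝ) (hγ₀ : 0 < γ₀) (hL : 0 < L) :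
    ∃ k : ℕ, min (Real.log 2) L / Real.sqrt (Real.log 2) ≤
      (Real.sqrt (2*Real.pi) * Real.exp 1 / γ₀ *
        (1/Real.sqrt (Real.log 2) + γ₀^2 * Real.sqrt (Real.log 2))) *
      ((2:ℝ)^(-(k:ℝ)/2) * ((2:ℝ)^(-(k:ℝ)/2) * γ₀ / Real.sqrt (2*Real.pi) * L *
        Real.exp (-(((2:ℝ)^(-(k:ℝ)/2)*γ₀)^2/2 * L)))) := by
  have hb : (0:ℝ) < γ₀^2/2 := by positivity
  set b := γ₀^2/2 with hbdef
  have hbL : 0 < b * L := by positivity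
  set k := ⌈Real.logb 2 (b*L)⌉₊ with hkdef
  refine ⟨k, ?_⟩
  have hQQ : (2:ℝ)^(-(k:ℝ)/2) * (2:ℝ)^(-(k:ℝ)/2) = (2:ℝ)^(-(k:ℝ)) := by
    rw [← Real.rpow_add two_pos]; ring_nf
  have hQpos : (0:ℝ) < (2:ℝ)^(-(k:ℝ)/2) := Real.rpow_pos_of_pos two_pos _
  have hPpos : (0:ℝ) < (2:ℝ)^(-(k:ℝ)) := Real.rpow_pos_of_pos two_pos _
  have hPk : (2:ℝ)^(-(k:ℝ)) * (2:ℝ)^((k:ℝ)) = 1 := by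
    rw [← Real.rpow_add two_pos]; simp
  -- upper bound on exponent
  have hk1 : b * L ≤ (2:ℝ)^((k:ℝ)) := by
    calc b * L = (2:ℝ)^(Real.logb 2 (b*L)) := (Real.rpow_logb two_pos (by norm_num) hbL).symm
    _ ≤ (2:ℝ)^((k:ℝ)) := Real.rpow_le_rpow_of_exponent_le one_le_two (Nat.le_ceil _)
  have hP1 : (2:ℝ)^(-(k:ℝ)) * (b*L) ≤ 1 := by
    have := mul_le_mul_of_nonneg_left hk1 hPpos.le
    nlinarith
  have hP2 : min L (1/(2*b)) ≤ (2:ℝ)^(-(k:ℝ)) * L := by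
    rcases le_or_gt (b*L) 1 with h | h
    · have hk0 : k = 0 := by
        rw [hkdef, Nat.ceil_eq_zero]
        exact Real.logb_nonpos one_lt_two hbL.le h
      rw [hk0]
      simp only [Nat.cast_zero, neg_zero, Real.rpow_zero, one_mul]
      exact min_le_left _ _
    · have hx : 0 ≤ Real.logb 2 (b*L) := Real.logb_nonneg one_lt_two h.le
      have hceil : (k:ℝ) < Real.logb 2 (b*L) + 1 := Nat.ceil_lt_add_one hx
      have h2k : (2:ℝ)^((k:ℝ)) < b*L*2 := by
        calc (2:ℝ)^((k:ℝ)) < (2:ℝ)^(Real.logb 2 (b*L) + 1) :=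
              Real.rpow_lt_rpow_of_exponent_lt one_lt_two hceil
        _ = b*L*2 := by
              rw [Real.rpow_add two_pos, Real.rpow_logb two_pos (by norm_num) hbL]
              norm_num
      have : 1/(2*b) ≤ (2:ℝ)^(-(k:ℝ)) * L := by
        have h2kpos : (0:ℝ) < (2:ℝ)^((k:ℝ)) := Real.rpow_pos_of_pos two_pos _
        rw [div_le_iff₀ (by positivity)]
        nlinarith
      exact le_trans (min_le_right _ _) this
  -- exponent identity
  have hexp : ((2:ℝ)^(-(k:ℝ)/2)*γ₀)^2/2 = (2:ℝ)^(-(k:ℝ)) * b := by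
    rw [hbdef, mul_pow, sq, hQQ]; ring
  have hexpge : Real.exp (-1) ≤ Real.exp (-(((2:ℝ)^(-(k:ℝ)/2)*γ₀)^2/2 * L)) := by
    apply Real.exp_le_exp.mpr
    rw [hexp]
    nlinarith
  -- constants
  have hl2 : (0:ℝ) < Real.sqrt (Real.log 2) := Real.sqrt_pos.mpr (Real.log_pos one_lt_two)
  have hl2sq : Real.sqrt (Real.log 2) * Real.sqrt (Real.log 2) = Real.log 2 :=
    Real.mul_self_sqrt (Real.log_pos one_lt_two).le
  have hc : (0:ℝ) < Real.sqrt (2*Real.pi) := Real.sqrt_pos.mpr (by positivity)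
  have hee : Real.exp 1 * Real.exp (-1) = 1 := by
    rw [← Real.exp_add]; norm_num
  have hE : (0:ℝ) < Real.exp (-(((2:ℝ)^(-(k:ℝ)/2)*γ₀)^2/2 * L)) := Real.exp_pos _
  set Q := (2:ℝ)^(-(k:ℝ)/2)
  set P := (2:ℝ)^(-(k:ℝ))
  set E := Real.exp (-((Q*γ₀)^2/2 * L))
  set l2 := Real.sqrt (Real.log 2)
  set c := Real.sqrt (2*Real.pi)
  -- RHS = e*(1/l2+γ₀² l2) * (P*L) * E
  have hrhs : (c * Real.exp 1 / γ₀ * (1/l2 + γ₀^2 * l2)) * (Q * (Q * γ₀ / c * L * E))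
      = Real.exp 1 * E * (1/l2 + γ₀^2 * l2) * (P * L) := by
    rw [← hQQ]
    field_simp
  rw [hrhs]
  have h1 : 1 ≤ Real.exp 1 * E := by
    calc (1:ℝ) = Real.exp 1 * Real.exp (-1) := hee.symm
    _ ≤ Real.exp 1 * E := by
        apply mul_le_mul_of_nonneg_left hexpge (Real.exp_pos 1).le
  have hfinal : min (Real.log 2) L / l2 ≤ (1/l2 + γ₀^2 * l2) * min L (1/(2*b)) := by
    rcases le_total L (1/(2*b)) with h | h
    · rw [min_eq_left h]
      have hm : min (Real.log 2) L ≤ L := min_le_right _ _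
      rw [div_le_iff₀ hl2]
      have h2 : (1/l2 + γ₀^2*l2)*L*l2 = L + γ₀^2*(l2*l2)*L := by field_simp
      rw [h2, hl2sq]
      have h3 : (0:ℝ) ≤ γ₀^2 * Real.log 2 * L := by
        have := (Real.log_pos one_lt_two).le
        positivity
      linarith
    · rw [min_eq_right h]
      have hml : min (Real.log 2) L ≤ Real.log 2 := min_le_left _ _
      have h2b : 1/(2*b) = 1/γ₀^2 := by rw [hbdef]; ring_nf
      rw [h2b, div_le_iff₀ hl2]
      have h3 : (1/l2 + γ₀^2*l2) * (1/γ₀^2) * l2 = 1/γ₀^2 + l2*l2 := by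
        field_simp
      rw [h3, hl2sq]
      have h4 : (0:ℝ) ≤ 1/γ₀^2 := by positivity
      linarith
  calc min (Real.log 2) L / l2 ≤ (1/l2 + γ₀^2 * l2) * min L (1/(2*b)) := hfinal
  _ ≤ (1/l2 + γ₀^2 * l2) * (P * L) := by
      apply mul_le_mul_of_nonneg_left hP2
      positivity
  _ ≤ Real.exp 1 * E * ((1/l2 + γ₀^2 * l2) * (P * L)) :=
      le_mul_of_one_le_left
        (mul_nonneg (by positivity) (mul_nonneg hPpos.le hL.le)) h1
  _ = Real.exp 1 * E * (1/l2 + γ₀^2 * l2) * (P * L) := by ring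

/-- For every `γ₀ > 0` there is `C > 0` such that for all `s ∈ (0,1)`,
`q_{1/2}(s) ≤ C · Σ_{k=0}^∞ 2^{−k/2} F_{2^{−k/2} γ₀}(s)`, the series being interpreted
(and automatically convergent) in `[0,∞]`. -/
theorem stmt4 (γ₀ : ℝ) (hγ₀ : 0 < γ₀) :
    ∃ C : ℝ, 0 < C ∧ ∀ s ∈ Set.Ioo (0:ℝ) 1,
      ENNReal.ofReal (qfun (1 / 2) s) ≤
        ENNReal.ofReal C *
          ∑' k : ℕ, ENNReal.ofReal ((2:ℝ) ^ (-(k:ℝ) / 2) * Ffun ((2:ℝ) ^ (-(k:ℝ) / 2) * γ₀) s) := by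
  have hl2 : (0:ℝ) < Real.sqrt (Real.log 2) := Real.sqrt_pos.mpr (Real.log_pos one_lt_two)
  have hc : (0:ℝ) < Real.sqrt (2*Real.pi) := Real.sqrt_pos.mpr (by positivity)
  set C := Real.sqrt (2*Real.pi) * Real.exp 1 / γ₀ *
      (1/Real.sqrt (Real.log 2) + γ₀^2 * Real.sqrt (Real.log 2)) with hCdef
  have hC : 0 < C := by
    have := Real.exp_pos 1
    positivity
  refine ⟨C, hC, ?_⟩
  intro s hs
  obtain ⟨hs0, hs1⟩ := hs
  have hlogs : Real.log s < 0 := Real.log_neg hs0 hs1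
  set L := -Real.log s with hLdef
  have hL : 0 < L := by simp only [hLdef]; linarith
  obtain ⟨k, hk⟩ := key γ₀ L hγ₀ hL
  -- rewrite qfun
  have hq : qfun (1/2) s = min (Real.log 2) L / Real.sqrt (Real.log 2) := by
    rw [qfun, if_pos (Set.mem_Ioo.mpr ⟨hs0, hs1⟩)]
    have hlog12 : Real.log (1/2 : ℝ) = -Real.log 2 := by
      rw [one_div, Real.log_inv]
    have habs12 : |Real.log (1/2 : ℝ)| = Real.log 2 := by
      rw [hlog12, abs_neg, abs_of_nonneg (Real.log_nonneg one_le_two)]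
    rw [habs12]
    congr 1
    rcases le_or_gt s (1/2 : ℝ) with h | h
    · rw [max_eq_left h, habs12]
      have : Real.log s ≤ Real.log (1/2 : ℝ) := Real.log_le_log hs0 h
      rw [hlog12] at this
      rw [min_eq_left (by simp only [hLdef]; linarith)]
    · rw [max_eq_right h.le, abs_of_neg hlogs]
      have : Real.log (1/2 : ℝ) ≤ Real.log s := Real.log_le_log (by norm_num) h.le
      rw [hlog12] at this
      rw [min_eq_right (by simp only [hLdef]; linarith)]
  -- rewrite the k-th term of the series
  have hF : (2:ℝ)^(-(k:ℝ)/2) * Ffun ((2:ℝ)^(-(k:ℝ)/2)*γ₀) s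
      = (2:ℝ)^(-(k:ℝ)/2) * ((2:ℝ)^(-(k:ℝ)/2)*γ₀ / Real.sqrt (2*Real.pi) * L *
          Real.exp (-(((2:ℝ)^(-(k:ℝ)/2)*γ₀)^2/2 * L))) := by
    rw [Ffun, if_pos (Set.mem_Ioo.mpr ⟨hs0, hs1⟩), abs_of_neg hlogs]
    have hrpow : s ^ (((2:ℝ)^(-(k:ℝ)/2)*γ₀)^2/2)
        = Real.exp (-(((2:ℝ)^(-(k:ℝ)/2)*γ₀)^2/2 * L)) := by
      rw [Real.rpow_def_of_pos hs0]
      congr 1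
      simp only [hLdef]
      ring
    rw [hrpow]
  rw [hq]
  calc ENNReal.ofReal (min (Real.log 2) L / Real.sqrt (Real.log 2))
      ≤ ENNReal.ofReal (C * ((2:ℝ)^(-(k:ℝ)/2) * Ffun ((2:ℝ)^(-(k:ℝ)/2)*γ₀) s)) := by
        apply ENNReal.ofReal_le_ofReal
        rw [hF]
        exact hk
    _ = ENNReal.ofReal C *
          ENNReal.ofReal ((2:ℝ)^(-(k:ℝ)/2) * Ffun ((2:ℝ)^(-(k:ℝ)/2)*γ₀) s) :=
        ENNReal.ofReal_mul hC.le
    _ ≤ ENNReal.ofReal C *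
          ∑' k : ℕ, ENNReal.ofReal ((2:ℝ) ^ (-(k:ℝ) / 2) * Ffun ((2:ℝ) ^ (-(k:ℝ) / 2) * γ₀) s) :=
        mul_le_mul_right (ENNReal.le_tsum k) _
end

section
/- For every continuously differentiable function g : [0,1] → ℝ with g(0) = g(1) = 0 and every ε > 0, there exists a polynomial Q with real coefficients satisfying Q(0) = 0 such that sup_{s ∈ (0,1)} |log s|·|g(s) − Q(s)| / q_{1/2}(s) ≤ ε. -/
open Set

/-- Antiderivative of a polynomial, vanishing at `0`. -/
noncomputable def pAnti (p : Polynomial ℝ) : Polynomial ℝ :=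
  p.sum fun n a => Polynomial.C (a / (n + 1)) * Polynomial.X ^ (n + 1)

lemma pAnti_deriv (p : Polynomial ℝ) : (pAnti p).derivative = p := by
  unfold pAnti
  rw [Polynomial.sum, map_sum]
  conv_rhs => rw [p.as_sum_support]
  refine Finset.sum_congr rfl fun n _ => ?_
  rw [Polynomial.derivative_C_mul, Polynomial.derivative_X_pow, ← mul_assoc]
  push_cast
  rw [← Polynomial.C_mul, div_mul_cancel₀ _ (by positivity : ((n:ℝ)+1) ≠ 0),
    Polynomial.C_mul_X_pow_eq_monomial]

lemma pAnti_eval0 (p : Polynomial ℝ) : (pAnti p).eval 0 = 0 := by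
  unfold pAnti
  rw [Polynomial.sum, Polynomial.eval_finset_sum]
  simp

/-- For every `C¹` function `g` on `[0,1]` with `g(0) = g(1) = 0` and every `ε > 0` there is a
polynomial `Q` with `Q(0) = 0` such that `sup_{s∈(0,1)} |log s|·|g(s) − Q(s)|/q_{1/2}(s) ≤ ε`. -/
theorem stmt8 (g g' : ℝ → ℝ)
    (hderiv : ∀ x ∈ Icc (0:ℝ) 1, HasDerivWithinAt g (g' x) (Icc (0:ℝ) 1) x)
    (hg' : ContinuousOn g' (Icc (0:ℝ) 1))
    (hg0 : g 0 = 0) (hg1 : g 1 = 0)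
    (ε : ℝ) (hε : 0 < ε) :
    ∃ Q : Polynomial ℝ, Q.eval 0 = 0 ∧
      ∀ s ∈ Ioo (0:ℝ) 1, |Real.log s| * |g s - Q.eval s| / qfun (1 / 2) s ≤ ε := by
  have hlog2 : (0:ℝ) < Real.log 2 := Real.log_pos one_lt_two
  set σ : ℝ := Real.sqrt (Real.log 2) with hσdef
  have hσ : 0 < σ := Real.sqrt_pos.mpr hlog2
  have hσσ : σ * σ = Real.log 2 := Real.mul_self_sqrt hlog2.le
  set δ : ℝ := ε * σ with hδdef
  have hδ : 0 < δ := mul_pos hε hσ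
  obtain ⟨P, hP⟩ := exists_polynomial_near_of_continuousOn 0 1 g' hg' δ hδ
  refine ⟨pAnti P, pAnti_eval0 P, ?_⟩
  -- key estimate: |g s - (pAnti P).eval s| ≤ δ * s for s ∈ [0,1]
  have key : ∀ s ∈ Icc (0:ℝ) 1, |g s - (pAnti P).eval s| ≤ δ * s := by
    intro s hs
    have hmvt := Convex.norm_image_sub_le_of_norm_hasDerivWithin_le
      (f := fun x => g x - (pAnti P).eval x) (f' := fun x => g' x - P.eval x)
      (C := δ) (s := Icc (0:ℝ) 1) ?_ ?_ (convex_Icc 0 1)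
      (left_mem_Icc.mpr zero_le_one) hs
    · simpa [hg0, pAnti_eval0, Real.norm_eq_abs, abs_of_nonneg hs.1] using hmvt
    · intro x hx
      have h1 := (Polynomial.hasDerivAt (pAnti P) x).hasDerivWithinAt (s := Icc (0:ℝ) 1)
      rw [pAnti_deriv] at h1
      exact (hderiv x hx).sub h1
    · intro x hx
      rw [Real.norm_eq_abs, abs_sub_comm]
      exact (hP x hx).le
  intro s hs
  have hs0 : 0 < s := hs.1
  have hs1 : s < 1 := hs.2
  have hq : qfun (1/2 : ℝ) s = |Real.log (max (1/2) s)| / σ := by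
    rw [qfun, if_pos hs]
    congr 1
    rw [show |Real.log (1/2 : ℝ)| = Real.log 2 by
      rw [one_div, Real.log_inv, abs_neg, abs_of_nonneg hlog2.le]]
  have hgs := key s ⟨hs0.le, hs1.le⟩
  have hlogs : |Real.log s| = -Real.log s := abs_of_nonpos (Real.log_nonpos hs0.le hs1.le)
  have hslog : s * |Real.log s| ≤ 1 := by
    have := Real.abs_log_mul_self_lt s hs0 hs1.le
    rw [abs_mul, abs_of_nonneg hs0.le] at this
    linarith [this]
  rcases le_or_gt s (1/2 : ℝ) with hhalf | hhalf
  · -- s ≤ 1/2 : max = 1/2, qfun = log 2 / σ = σ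
    have hmax : max (1/2 : ℝ) s = 1/2 := max_eq_left hhalf
    rw [hq, hmax, show |Real.log (1/2 : ℝ)| = Real.log 2 by
      rw [one_div, Real.log_inv, abs_neg, abs_of_nonneg hlog2.le], ← hσσ,
      mul_div_assoc σ σ σ, div_self hσ.ne', mul_one]
    rw [div_le_iff₀ hσ]
    calc |Real.log s| * |g s - (pAnti P).eval s| ≤ |Real.log s| * (δ * s) := by
          exact mul_le_mul_of_nonneg_left hgs (abs_nonneg _)
      _ = δ * (s * |Real.log s|) := by ring
      _ ≤ δ * 1 := mul_le_mul_of_nonneg_left hslog hδ.le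
      _ = ε * σ := by rw [mul_one, hδdef]
  · -- s > 1/2 : max = s
    have hmax : max (1/2 : ℝ) s = s := max_eq_right hhalf.le
    have hlogs_ne : |Real.log s| ≠ 0 := by
      have : Real.log s < 0 := Real.log_neg hs0 hs1
      simp [abs_ne_zero, this.ne]
    rw [hq, hmax, div_div_eq_mul_div, mul_comm (|Real.log s| * |g s - (pAnti P).eval s|) σ,
      mul_div_assoc, mul_comm (|Real.log s|) (|g s - (pAnti P).eval s|),
      mul_div_assoc, div_self hlogs_ne, mul_one]
    calc σ * |g s - (pAnti P).eval s| ≤ σ * (δ * s) :=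
          mul_le_mul_of_nonneg_left hgs hσ.le
      _ ≤ σ * (δ * 1) := by
          exact mul_le_mul_of_nonneg_left (mul_le_mul_of_nonneg_left hs1.le hδ.le) hσ.le
      _ = ε * (σ * σ) := by rw [hδdef]; ring
      _ = ε * Real.log 2 := by rw [hσσ]
      _ ≤ ε * 1 := mul_le_mul_of_nonneg_left
          (by linarith [Real.log_le_sub_one_of_pos (by norm_num : (0:ℝ) < 2)]) hε.le
      _ = ε := mul_one ε
end
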